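/- Let N ≥ 1. Suppose: (i) {ψ_θ}_{θ∈Θ} is an orthonormal basis of ℂ^N indexed by a finite set Θ = Θ_B ⊔ Θ_H (disjoint union); (ii) A = Q Λ Q* where Q ∈ ℂ^{N×N} is unitary with columns ξ₁,…,ξ_N and Λ = diag(λ₁,…,λ_N); (iii) B ∈ ℂ^{N×N} satisfies (I − B A) ψ_θ = σ_θ ψ_θ for every θ ∈ Θ, with |σ_θ| ≤ μ_B for θ ∈ Θ_B and |σ_θ| ≤ 1 + ε_B for θ ∈ Θ_H, where μ_B ∈ (0,1) and ε_B ≥ 0; (iv) for each θ ∈ Θ there is a set V_θ ⊆ {1,…,N} and a vector t_θ ∈ ℂ^N supported in V_θ with ψ_θ = Q t_θ; (v) H ∈ ℂ^{N×N}, and with l_i = ξ_i − H(λ_i ξ_i), the bounds ∑_{i∈V_θ} ‖l_i‖₂² ≤ C hold for all θ ∈ Θ_B and ∑_{i∈V_θ} ‖l_i‖₂² ≤ μ_H hold for all θ ∈ Θ_H, with C ≥ 0 and μ_H ∈ (0,1); (vi) for a fixed integer M ≥ 0, the vectors {(I − H A)(I − B A)^M ψ_θ}_{θ∈Θ_B}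 are pairwise orthogonal, and the vectors {(I − H A)(I − B A)^M ψ_θ}_{θ∈Θ_H} are pairwise orthogonal. Then the hybrid iterative method satisfies, for every e ∈ ℂ^N, ‖(I − H A)(I − B A)^M e‖₂ ≤ η ‖e‖₂, where η = sqrt( max{ 2 μ_B^{2M} C, 2 (1 + ε_B)^{2M} μ_H } ). -/

import Mathlib

/-!
Expand `e` in the orthonormal basis `ψ`. Since the columns `ξ_i` of `Q` are eigenvectors of `A`,
`E ψ_θ = σ_θ^M (1 - H A) Q t_θ = σ_θ^M ∑_{i ∈ V_θ} t_{θ,i} l_i`, and `‖t_θ‖ = ‖ψ_θ‖ = 1` because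
`Q` is unitary; Cauchy–Schwarz then gives `‖E ψ_θ‖² ≤ |σ_θ|^{2M} ∑_{i ∈ V_θ} ‖l_i‖²`.
Orthogonality within `Θ_B` and within `Θ_H` makes the image of each half of `e` obey
Pythagoras, and `‖x + y‖² ≤ 2‖x‖² + 2‖y‖²` joins the two halves: this is the factor `2` in `η`.
-/

open Matrix

noncomputable def l2norm {N : ℕ} (x : Fin N → ℂ) : ℝ :=
  Real.sqrt (∑ i, ‖x i‖ ^ 2)

open scoped InnerProductSpace

theorem norm_sq_sum_smul_le {𝕜 E ι : Type*} [NormedField 𝕜] [SeminormedAddCommGroup E]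
    [NormedSpace 𝕜 E] (s : Finset ι) (c : ι → 𝕜) (x : ι → E) :
    ‖∑ i ∈ s, c i • x i‖ ^ 2 ≤ (∑ i ∈ s, ‖c i‖ ^ 2) * ∑ i ∈ s, ‖x i‖ ^ 2 := by
  calc ‖∑ i ∈ s, c i • x i‖ ^ 2 ≤ (∑ i ∈ s, ‖c i‖ * ‖x i‖) ^ 2 := by
        gcongr
        exact (norm_sum_le _ _).trans_eq (Finset.sum_congr rfl fun i _ => norm_smul _ _)
    _ ≤ _ := Finset.sum_mul_sq_le_sq_mul_sq _ _ _

theorem norm_add_sq_le_two_mul {G : Type*} [SeminormedAddCommGroup G] (x y : G) :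
    ‖x + y‖ ^ 2 ≤ 2 * ‖x‖ ^ 2 + 2 * ‖y‖ ^ 2 := by
  nlinarith [norm_add_le x y, norm_nonneg (x + y), add_sq_le (a := ‖x‖) (b := ‖y‖)]

section OrthogonalSplitting

variable {𝕜 E F : Type*} [RCLike 𝕜] [NormedAddCommGroup E] [InnerProductSpace 𝕜 E]
  [NormedAddCommGroup F] [InnerProductSpace 𝕜 F] {ι : Type*}

theorem norm_sq_sum_of_inner_eq_zero {s : Finset ι} {w : ι → E}
    (hw : ∀ i ∈ s, ∀ j ∈ s, i ≠ j → ⟪w i, w j⟫_𝕜 = 0) :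
    ‖∑ i ∈ s, w i‖ ^ 2 = ∑ i ∈ s, ‖w i‖ ^ 2 := by
  rw [← RCLike.ofReal_inj (K := 𝕜), RCLike.ofReal_pow, ← inner_self_eq_norm_sq_to_K, sum_inner,
    RCLike.ofReal_sum]
  refine Finset.sum_congr rfl fun i hi => ?_
  rw [inner_sum, Finset.sum_eq_single_of_mem i hi fun j hj hji => hw i hi j hj hji.symm,
    inner_self_eq_norm_sq_to_K, RCLike.ofReal_pow]

theorem norm_sq_sum_smul_le_of_inner_eq_zero {s : Finset ι} {w : ι → E}
    (hw : ∀ i ∈ s, ∀ j ∈ s, i ≠ j → ⟪w i, w j⟫_𝕜 = 0) {K : ℝ} (hK : ∀ i ∈ s, ‖w i‖ ^ 2 ≤ K)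
    (c : ι → 𝕜) :
    ‖∑ i ∈ s, c i • w i‖ ^ 2 ≤ K * ∑ i ∈ s, ‖c i‖ ^ 2 := by
  have hcw : ∀ i ∈ s, ∀ j ∈ s, i ≠ j → ⟪c i • w i, c j • w j⟫_𝕜 = 0 := fun i hi j hj hij => by
    rw [inner_smul_left, inner_smul_right, hw i hi j hj hij, mul_zero, mul_zero]
  rw [norm_sq_sum_of_inner_eq_zero hcw, Finset.mul_sum]
  refine Finset.sum_le_sum fun i hi => ?_
  rw [norm_smul, mul_pow, mul_comm K]
  exact mul_le_mul_of_nonneg_left (hK i hi) (by positivity)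

theorem OrthonormalBasis.norm_map_le_of_inner_eq_zero_on_parts [Fintype ι] [DecidableEq ι]
    (b : OrthonormalBasis ι 𝕜 E) (T : E →ₗ[𝕜] F) {s t : Finset ι} (hst : Disjoint s t)
    (hcover : s ∪ t = Finset.univ)
    (hs : ∀ i ∈ s, ∀ j ∈ s, i ≠ j → ⟪T (b i), T (b j)⟫_𝕜 = 0)
    (ht : ∀ i ∈ t, ∀ j ∈ t, i ≠ j → ⟪T (b i), T (b j)⟫_𝕜 = 0)
    {Ks Kt : ℝ} (hKs : ∀ i ∈ s, ‖T (b i)‖ ^ 2 ≤ Ks) (hKt : ∀ i ∈ t, ‖T (b i)‖ ^ 2 ≤ Kt)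
    (x : E) :
    ‖T x‖ ≤ √(max (2 * Ks) (2 * Kt)) * ‖x‖ := by
  set c : ι → 𝕜 := fun i => ⟪b i, x⟫_𝕜
  have hTx : T x = ∑ i ∈ s, c i • T (b i) + ∑ i ∈ t, c i • T (b i) := by
    conv_lhs => rw [← b.sum_repr' x]
    rw [map_sum, ← Finset.sum_union hst, hcover]
    simp only [map_smul, c]
  have hparts : ∑ i ∈ s, ‖c i‖ ^ 2 + ∑ i ∈ t, ‖c i‖ ^ 2 = ‖x‖ ^ 2 := by
    rw [← Finset.sum_union hst, hcover, b.sum_sq_norm_inner_right]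
  have hsq : ‖T x‖ ^ 2 ≤ max (2 * Ks) (2 * Kt) * ‖x‖ ^ 2 := by
    calc ‖T x‖ ^ 2
        ≤ 2 * ‖∑ i ∈ s, c i • T (b i)‖ ^ 2 + 2 * ‖∑ i ∈ t, c i • T (b i)‖ ^ 2 :=
          hTx ▸ norm_add_sq_le_two_mul _ _
      _ ≤ 2 * (Ks * ∑ i ∈ s, ‖c i‖ ^ 2) + 2 * (Kt * ∑ i ∈ t, ‖c i‖ ^ 2) := by
          gcongr
          · exact norm_sq_sum_smul_le_of_inner_eq_zero hs hKs c
          · exact norm_sq_sum_smul_le_of_inner_eq_zero ht hKt c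
      _ ≤ max (2 * Ks) (2 * Kt) * ‖x‖ ^ 2 := by
          rw [← hparts, mul_add, ← mul_assoc, ← mul_assoc]
          gcongr
          exacts [le_max_left _ _, le_max_right _ _]
  calc ‖T x‖ ≤ √(max (2 * Ks) (2 * Kt) * ‖x‖ ^ 2) := Real.le_sqrt_of_sq_le hsq
    _ = √(max (2 * Ks) (2 * Kt)) * ‖x‖ := by
      rw [Real.sqrt_mul' _ (sq_nonneg _), Real.sqrt_sq (norm_nonneg x)]

end OrthogonalSplitting

namespace Matrix

variable {n R : Type*} [Fintype n]

theorem pow_mulVec_eq_smul_of_mulVec_eq_smul [DecidableEq n] [CommSemiring R] {S : Matrix n n R}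
    {v : n → R} {c : R} (h : S *ᵥ v = c • v) (m : ℕ) : (S ^ m) *ᵥ v = c ^ m • v := by
  induction m with
  | zero => simp
  | succ m ih =>
    rw [pow_succ, ← mulVec_mulVec, h, mulVec_smul, ih, smul_smul, pow_succ']

theorem mulVec_mulVec_eq_sum_smul_col [CommSemiring R] (P Q : Matrix n n R) (t : n → R) :
    P *ᵥ (Q *ᵥ t) = ∑ i, t i • P *ᵥ fun k => Q k i := by
  have hQt : Q *ᵥ t = ∑ i, t i • fun k => Q k i := by
    ext k
    simp [mulVec, dotProduct, Finset.sum_apply, mul_comm]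
  rw [hQt, ← mulVecLin_apply, map_sum]
  simp only [map_smul, mulVecLin_apply]

theorem mulVec_col_eq_smul_of_eq_mul_diagonal_mul_conjTranspose [DecidableEq n] [CommRing R]
    [StarRing R] {Q A : Matrix n n R} (hQ : Q ∈ unitaryGroup n R) {d : n → R}
    (hA : A = Q * diagonal d * Qᴴ) (i : n) :
    A *ᵥ (fun k => Q k i) = d i • fun k => Q k i := by
  have hcol : Qᴴ *ᵥ (fun k => Q k i) = Pi.single i 1 := by
    rw [show (fun k => Q k i) = Q *ᵥ Pi.single i 1 by rw [mulVec_single_one]; rfl, mulVec_mulVec,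
      ← star_eq_conjTranspose, (mem_unitaryGroup_iff').mp hQ, one_mulVec]
  rw [hA, ← mulVec_mulVec, ← mulVec_mulVec, hcol, diagonal_mulVec_single, mulVec_single]
  funext k
  simp [mul_comm]

theorem star_mulVec_dotProduct_mulVec_of_mem_unitaryGroup [CommRing R] [StarRing R]
    [DecidableEq n] {Q : Matrix n n R} (hQ : Q ∈ unitaryGroup n R) (x y : n → R) :
    star (Q *ᵥ x) ⬝ᵥ (Q *ᵥ y) = star x ⬝ᵥ y := by
  rw [star_mulVec, dotProduct_mulVec, vecMul_vecMul, ← star_eq_conjTranspose,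
    (mem_unitaryGroup_iff').mp hQ, vecMul_one]

end Matrix

theorem l2norm_eq_norm_toLp {N : ℕ} (x : Fin N → ℂ) : l2norm x = ‖WithLp.toLp 2 x‖ := by
  rw [l2norm, EuclideanSpace.norm_eq]

theorem EuclideanSpace.inner_toLp_toLp_eq_star_dotProduct {𝕜 n : Type*} [RCLike 𝕜] [Fintype n]
    (x y : n → 𝕜) : ⟪WithLp.toLp 2 x, WithLp.toLp 2 y⟫_𝕜 = star x ⬝ᵥ y :=
  dotProduct_comm _ _

section UnitaryDiagonalization

variable {𝕜 n : Type*} [RCLike 𝕜] [Fintype n] [DecidableEq n] {Q A : Matrix n n 𝕜} {d : n → 𝕜}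
  {t : n → 𝕜} {V : Finset n}

theorem one_sub_mul_mulVec_mulVec_eq_sum (hQ : Q ∈ unitaryGroup n 𝕜)
    (hA : A = Q * diagonal d * Qᴴ) (H : Matrix n n 𝕜) (ht : ∀ i ∉ V, t i = 0) :
    (1 - H * A) *ᵥ (Q *ᵥ t) = ∑ i ∈ V, t i • ((fun k => Q k i) - H *ᵥ (d i • fun k => Q k i)) := by
  rw [mulVec_mulVec_eq_sum_smul_col, ← Finset.sum_subset (Finset.subset_univ V)
    fun i _ hi => by rw [ht i hi, zero_smul]]
  refine Finset.sum_congr rfl fun i _ => ?_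
  rw [sub_mulVec, one_mulVec, ← mulVec_mulVec,
    mulVec_col_eq_smul_of_eq_mul_diagonal_mul_conjTranspose hQ hA]

theorem sum_norm_sq_eq_one_of_mem_unitaryGroup (hQ : Q ∈ unitaryGroup n 𝕜)
    (hunit : star (Q *ᵥ t) ⬝ᵥ (Q *ᵥ t) = 1) (ht : ∀ i ∉ V, t i = 0) :
    ∑ i ∈ V, ‖t i‖ ^ 2 = 1 := by
  rw [star_mulVec_dotProduct_mulVec_of_mem_unitaryGroup hQ,
    ← EuclideanSpace.inner_toLp_toLp_eq_star_dotProduct, inner_self_eq_norm_sq_to_K] at hunit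
  rw [Finset.sum_subset (Finset.subset_univ V) fun i _ hi => by simp [ht i hi],
    ← EuclideanSpace.norm_sq_eq]
  exact_mod_cast hunit

theorem norm_sq_mul_pow_mulVec_le (hQ : Q ∈ unitaryGroup n 𝕜) (hA : A = Q * diagonal d * Qᴴ)
    (H S : Matrix n n 𝕜) {ψ : n → 𝕜} {σ : 𝕜} (hS : S *ᵥ ψ = σ • ψ) (hψ : star ψ ⬝ᵥ ψ = 1)
    (hψQ : ψ = Q *ᵥ t) (ht : ∀ i ∉ V, t i = 0) (M : ℕ) :
    ‖WithLp.toLp 2 (((1 - H * A) * S ^ M) *ᵥ ψ)‖ ^ 2 ≤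
      ‖σ‖ ^ (2 * M) *
        ∑ i ∈ V, ‖WithLp.toLp 2 ((fun k => Q k i) - H *ᵥ (d i • fun k => Q k i))‖ ^ 2 := by
  subst hψQ
  rw [← mulVec_mulVec, pow_mulVec_eq_smul_of_mulVec_eq_smul hS, mulVec_smul,
    one_sub_mul_mulVec_mulVec_eq_sum hQ hA H ht, WithLp.toLp_smul, norm_smul, mul_pow,
    norm_pow, ← pow_mul, mul_comm M, WithLp.toLp_sum]
  simp only [WithLp.toLp_smul]
  gcongr
  calc _ ≤ _ := norm_sq_sum_smul_le V t _
    _ = _ := by rw [sum_norm_sq_eq_one_of_mem_unitaryGroup hQ hψ ht, one_mul]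

end UnitaryDiagonalization

theorem hybrid_method_main_convergence_general
    {N : ℕ}
    {Θ : Type*} [Fintype Θ] [DecidableEq Θ]
    (hcard : Fintype.card Θ = N)
    (ΘB ΘH : Finset Θ) (hdisj : Disjoint ΘB ΘH) (hcover : ΘB ∪ ΘH = Finset.univ)
    (ψ : Θ → Fin N → ℂ)
    (h_on : ∀ a b : Θ, star (ψ a) ⬝ᵥ ψ b = if a = b then 1 else 0)
    (Q : Matrix (Fin N) (Fin N) ℂ) (hQ : Q ∈ Matrix.unitaryGroup (Fin N) ℂ)
    (lam : Fin N → ℂ)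
    (A B H : Matrix (Fin N) (Fin N) ℂ)
    (hA : A = Q * Matrix.diagonal lam * Qᴴ)
    (σ : Θ → ℂ)
    (hB : ∀ θ : Θ, (1 - B * A).mulVec (ψ θ) = σ θ • ψ θ)
    (μB εB : ℝ)
    (hσB : ∀ θ ∈ ΘB, ‖σ θ‖ ≤ μB)
    (hσH : ∀ θ ∈ ΘH, ‖σ θ‖ ≤ 1 + εB)
    (V : Θ → Finset (Fin N)) (t : Θ → Fin N → ℂ)
    (ht : ∀ θ : Θ, ∀ i ∉ V θ, t θ i = 0)
    (hψQ : ∀ θ : Θ, ψ θ = Q.mulVec (t θ))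
    (l : Fin N → Fin N → ℂ)
    (hl : ∀ i : Fin N, l i = (fun k => Q k i) - H.mulVec (lam i • fun k => Q k i))
    (C μH : ℝ) (hC : 0 ≤ C) (hμH : 0 < μH)
    (hlB : ∀ θ ∈ ΘB, ∑ i ∈ V θ, (l2norm (l i)) ^ 2 ≤ C)
    (hlH : ∀ θ ∈ ΘH, ∑ i ∈ V θ, (l2norm (l i)) ^ 2 ≤ μH)
    (M : ℕ)
    (horthB : ∀ θ ∈ ΘB, ∀ θ' ∈ ΘB, θ ≠ θ' →
      star (((1 - H * A) * (1 - B * A) ^ M).mulVec (ψ θ)) ⬝ᵥ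
        (((1 - H * A) * (1 - B * A) ^ M).mulVec (ψ θ')) = 0)
    (horthH : ∀ θ ∈ ΘH, ∀ θ' ∈ ΘH, θ ≠ θ' →
      star (((1 - H * A) * (1 - B * A) ^ M).mulVec (ψ θ)) ⬝ᵥ
        (((1 - H * A) * (1 - B * A) ^ M).mulVec (ψ θ')) = 0) :
    ∀ e : Fin N → ℂ,
      l2norm (((1 - H * A) * (1 - B * A) ^ M).mulVec e) ≤
        Real.sqrt (max (2 * μB ^ (2 * M) * C) (2 * (1 + εB) ^ (2 * M) * μH)) * l2norm e := by
  intro e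
  set E := (1 - H * A) * (1 - B * A) ^ M
  have hon : Orthonormal ℂ fun θ => WithLp.toLp 2 (ψ θ) := orthonormal_iff_ite.2 fun a b => by
    rw [EuclideanSpace.inner_toLp_toLp_eq_star_dotProduct, h_on]
  let b := OrthonormalBasis.mk hon
    (hon.linearIndependent.span_eq_top_of_card_eq_finrank' (by simp [hcard])).ge
  have hbE : ∀ θ, toLpLin 2 2 E (b θ) = WithLp.toLp 2 (E *ᵥ ψ θ) := fun θ => by
    simp [b, OrthonormalBasis.coe_mk]
  have horth : ∀ θ θ', ⟪toLpLin 2 2 E (b θ), toLpLin 2 2 E (b θ')⟫_ℂ =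
      star (E *ᵥ ψ θ) ⬝ᵥ (E *ᵥ ψ θ') := fun θ θ' => by
    rw [hbE, hbE, EuclideanSpace.inner_toLp_toLp_eq_star_dotProduct]
  have hbound : ∀ θ {s K : ℝ}, ‖σ θ‖ ≤ s → ∑ i ∈ V θ, l2norm (l i) ^ 2 ≤ K → 0 ≤ K →
      ‖toLpLin 2 2 E (b θ)‖ ^ 2 ≤ s ^ (2 * M) * K := fun θ s K hσ hlK hK => by
    have hEψ := norm_sq_mul_pow_mulVec_le hQ hA H _ (hB θ) (by simpa using h_on θ θ) (hψQ θ)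
      (ht θ) M
    simp only [← hl, ← l2norm_eq_norm_toLp] at hEψ
    rw [hbE, ← l2norm_eq_norm_toLp]
    exact hEψ.trans <| (mul_le_mul_of_nonneg_left hlK (by positivity)).trans <|
      mul_le_mul_of_nonneg_right (pow_le_pow_left₀ (norm_nonneg _) hσ _) hK
  have key := b.norm_map_le_of_inner_eq_zero_on_parts (toLpLin 2 2 E) hdisj hcover
    (fun θ hθ θ' hθ' hne => (horth θ θ').trans (horthB θ hθ θ' hθ' hne))
    (fun θ hθ θ' hθ' hne => (horth θ θ').trans (horthH θ hθ θ' hθ' hne))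
    (fun θ hθ => hbound θ (hσB θ hθ) (hlB θ hθ) hC)
    (fun θ hθ => hbound θ (hσH θ hθ) (hlH θ hθ) hμH.le) (WithLp.toLp 2 e)
  simpa only [l2norm_eq_norm_toLp, mul_assoc, toLpLin_toLp, toLin'_apply] using key

/-- **Main convergence theorem for the hybrid iterative method (Theorem 1).**
Under the smoothing assumption on `B` (its error propagation matrix has the orthonormal
basis `{ψ_θ}` as eigenvectors, with eigenvalue bounds `μ_B` on `Θ_B` and `1 + ε_B` on `Θ_H`),
the approximation assumption on `H` (with `l_i = ξ_i − H(λ_i ξ_i)`, the sums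
`∑_{i ∈ V_θ} ‖l_i‖₂²` are bounded by `C` on `Θ_B` and by `μ_H` on `Θ_H`, where
`ψ_θ = Q t_θ` with `t_θ` supported in `V_θ`), and the orthogonality condition on the images
of `ψ_θ` under `E = (I − H A)(I − B A)^M`, the hybrid method contracts every error `e`:
`‖E e‖₂ ≤ η ‖e‖₂` with `η = √(max{2 μ_B^{2M} C, 2 (1 + ε_B)^{2M} μ_H})`. -/
theorem hybrid_method_main_convergence
    {N : ℕ} (hN : 1 ≤ N)
    {Θ : Type*} [Fintype Θ] [DecidableEq Θ]
    (hcard : Fintype.card Θ = N)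
    (ΘB ΘH : Finset Θ) (hdisj : Disjoint ΘB ΘH) (hcover : ΘB ∪ ΘH = Finset.univ)
    (ψ : Θ → Fin N → ℂ)
    (h_on : ∀ a b : Θ, star (ψ a) ⬝ᵥ ψ b = if a = b then 1 else 0)
    (Q : Matrix (Fin N) (Fin N) ℂ) (hQ : Q ∈ Matrix.unitaryGroup (Fin N) ℂ)
    (lam : Fin N → ℂ)
    (A B H : Matrix (Fin N) (Fin N) ℂ)
    (hA : A = Q * Matrix.diagonal lam * Qᴴ)
    (σ : Θ → ℂ)
    (hB : ∀ θ : Θ, (1 - B * A).mulVec (ψ θ) = σ θ • ψ θ)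
    (μB εB : ℝ) (hμB : 0 < μB) (hμB1 : μB < 1) (hεB : 0 ≤ εB)
    (hσB : ∀ θ ∈ ΘB, ‖σ θ‖ ≤ μB)
    (hσH : ∀ θ ∈ ΘH, ‖σ θ‖ ≤ 1 + εB)
    (V : Θ → Finset (Fin N)) (t : Θ → Fin N → ℂ)
    (ht : ∀ θ : Θ, ∀ i ∉ V θ, t θ i = 0)
    (hψQ : ∀ θ : Θ, ψ θ = Q.mulVec (t θ))
    (l : Fin N → Fin N → ℂ)
    (hl : ∀ i : Fin N, l i = (fun k => Q k i) - H.mulVec (lam i • fun k => Q k i))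
    (C μH : ℝ) (hC : 0 ≤ C) (hμH : 0 < μH) (hμH1 : μH < 1)
    (hlB : ∀ θ ∈ ΘB, ∑ i ∈ V θ, (l2norm (l i)) ^ 2 ≤ C)
    (hlH : ∀ θ ∈ ΘH, ∑ i ∈ V θ, (l2norm (l i)) ^ 2 ≤ μH)
    (M : ℕ)
    (horthB : ∀ θ ∈ ΘB, ∀ θ' ∈ ΘB, θ ≠ θ' →
      star (((1 - H * A) * (1 - B * A) ^ M).mulVec (ψ θ)) ⬝ᵥ
        (((1 - H * A) * (1 - B * A) ^ M).mulVec (ψ θ')) = 0)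
    (horthH : ∀ θ ∈ ΘH, ∀ θ' ∈ ΘH, θ ≠ θ' →
      star (((1 - H * A) * (1 - B * A) ^ M).mulVec (ψ θ)) ⬝ᵥ
        (((1 - H * A) * (1 - B * A) ^ M).mulVec (ψ θ')) = 0) :
    ∀ e : Fin N → ℂ,
      l2norm (((1 - H * A) * (1 - B * A) ^ M).mulVec e) ≤
        Real.sqrt (max (2 * μB ^ (2 * M) * C) (2 * (1 + εB) ^ (2 * M) * μH)) * l2norm e :=
  hybrid_method_main_convergence_general hcard ΘB ΘH hdisj hcover ψ h_on Q hQ lam A B H hA σ hB μB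
    εB hσB hσH V t ht hψQ l hl C μH hC hμH hlB hlH M horthB horthH
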